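/- arXiv:1904.10667 — 3 statements merged into one kernel-verified Lean document; each statement's English description precedes it below -/
import Mathlib

section
/- Let m ≥ 1 and k ≥ 1. The number of strictly increasing chains A_1 ⊊ A_2 ⊊ ⋯ ⊊ A_k of subsets of an m-element set with A_1 ≠ ∅ and A_k not equal to the whole set equals Surj(m, k+1), the number of surjections from an m-element set onto a (k+1)-element set. -/
/-!
A map `f : α → Fin (n + 2)` is recorded by the chain of its sublevel sets `{x | f x ≤ i}`,
`i ≤ n`, and is recovered from any monotone chain by sending `x` to the number of members that
miss it. The fibre of `j` is the difference between consecutive members of this chain completed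
by `∅` below and `α` above, so `f` is onto exactly when the completed chain is strict: the chain
is strict, its first member is nonempty and its last one is proper.
-/

/-- The number of surjective functions from an `m`-element set onto a `k`-element set. -/
noncomputable def Surj (m k : ℕ) : ℕ := Nat.card {f : Fin m → Fin k // Function.Surjective f}

open Finset

section

variable {α : Type*} {n : ℕ}

def sublevelChain [Fintype α] (f : α → Fin (n + 1)) (i : Fin n) : Finset α :=
  {x | f x ≤ i.castSucc}

def chainRank [DecidableEq α] (A : Fin n → Finset α) (x : α) : Fin (n + 1) :=
  ⟨#{i | x ∉ A i}, Nat.lt_succ_of_le ((card_filter_le _ _).trans_eq (card_fin n))⟩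

@[simp]
lemma mem_sublevelChain [Fintype α] {f : α → Fin (n + 1)} {i : Fin n} {x : α} :
    x ∈ sublevelChain f i ↔ f x ≤ i.castSucc := by
  simp [sublevelChain]

lemma sublevelChain_monotone [Fintype α] (f : α → Fin (n + 1)) : Monotone (sublevelChain f) :=
  fun _ _ hij _ hx => mem_sublevelChain.2 <| (mem_sublevelChain.1 hx).trans (by simpa using hij)

lemma chainRank_le_castSucc_iff [DecidableEq α] {A : Fin n → Finset α} (hA : Monotone A) (x : α) (i : Fin n) :
    chainRank A x ≤ i.castSucc ↔ x ∈ A i := by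
  simp only [chainRank, Fin.le_def, Fin.val_castSucc]
  constructor
  · intro hle
    by_contra hx
    have hIic : Iic i ⊆ ({j | x ∉ A j} : Finset (Fin n)) := fun j hj =>
      mem_filter.2 ⟨mem_univ j, fun hxj => hx (hA (mem_Iic.1 hj) hxj)⟩
    have := card_le_card hIic
    rw [Fin.card_Iic] at this
    omega
  · intro hx
    have hIio : ({j | x ∉ A j} : Finset (Fin n)) ⊆ Iio i := fun j hj =>
      mem_Iio.2 <| lt_of_not_ge fun hij => (mem_filter.1 hj).2 (hA hij hx)
    simpa using card_le_card hIio

lemma sublevelChain_chainRank [Fintype α] [DecidableEq α] {A : Fin n → Finset α} (hA : Monotone A) :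
    sublevelChain (chainRank A) = A := by
  ext i x
  rw [mem_sublevelChain, chainRank_le_castSucc_iff hA]

lemma chainRank_sublevelChain [Fintype α] [DecidableEq α] (f : α → Fin (n + 1)) : chainRank (sublevelChain f) = f := by
  funext x
  have hmiss : ({i | x ∉ sublevelChain f i} : Finset (Fin n)) =
      ({i | (i : ℕ) < f x} : Finset (Fin n)) := by
    ext i
    simp [Fin.le_def]
  ext
  rw [chainRank, Fin.val_mk, hmiss, Fin.card_filter_val_lt]
  exact min_eq_right (Nat.lt_succ_iff.1 (f x).isLt)

lemma surjective_iff_sublevelChain [Fintype α] (f : α → Fin (n + 2)) :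
    Function.Surjective f ↔ StrictMono (sublevelChain f) ∧ sublevelChain f 0 ≠ ∅ ∧
      sublevelChain f (Fin.last n) ≠ univ := by
  constructor
  · intro hf
    refine ⟨fun i j hij => ?_, ?_, ?_⟩
    · obtain ⟨x, hx⟩ := hf j.castSucc
      refine lt_of_le_of_ne (sublevelChain_monotone f hij.le) fun hL => ?_
      have hxj : x ∈ sublevelChain f j := by simp [hx]
      rw [← hL, mem_sublevelChain, hx, Fin.castSucc_le_castSucc_iff] at hxj
      exact hxj.not_gt hij
    · obtain ⟨x, hx⟩ := hf 0
      exact ne_empty_of_mem (a := x) (by simp [hx])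
    · obtain ⟨x, hx⟩ := hf (Fin.last _)
      intro hL
      have hx' := hL ▸ mem_univ x
      rw [mem_sublevelChain, hx, Fin.le_def] at hx'
      simp at hx'
  · rintro ⟨hmono, hfirst, hlast⟩ j
    induction j using Fin.lastCases with
    | last =>
      obtain ⟨x, hx⟩ := not_forall.1 (mt eq_univ_iff_forall.2 hlast)
      rw [mem_sublevelChain, not_le] at hx
      exact ⟨x, Fin.ext (by simp [Fin.lt_def] at hx ⊢; omega)⟩
    | cast i =>
      induction i using Fin.cases with
      | zero =>
        obtain ⟨x, hx⟩ := nonempty_iff_ne_empty.2 hfirst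
        exact ⟨x, le_antisymm (mem_sublevelChain.1 hx) (Fin.zero_le _)⟩
      | succ i =>
        obtain ⟨x, hx, hx'⟩ := exists_of_ssubset (hmono (Fin.castSucc_lt_succ (i := i)))
        rw [mem_sublevelChain] at hx hx'
        have hlt := Fin.castSucc_lt_iff_succ_le.1 (not_le.1 hx')
        exact ⟨x, le_antisymm hx (by rwa [← Fin.succ_castSucc])⟩

def surjectionsEquivStrictChains [Fintype α] [DecidableEq α] :
    {f : α → Fin (n + 2) // Function.Surjective f} ≃
      {A : Fin (n + 1) → Finset α // StrictMono A ∧ A 0 ≠ ∅ ∧ A (Fin.last n) ≠ univ} where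
  toFun f := ⟨sublevelChain f.1, (surjective_iff_sublevelChain f.1).1 f.2⟩
  invFun A := ⟨chainRank A.1, (surjective_iff_sublevelChain _).2 <| by
    rw [sublevelChain_chainRank A.2.1.monotone]; exact A.2⟩
  left_inv f := Subtype.ext (chainRank_sublevelChain f.1)
  right_inv A := Subtype.ext (sublevelChain_chainRank A.2.1.monotone)

end

/-- For `m ≥ 1` and `k ≥ 1`, the number of strictly increasing chains
`A₁ ⊊ A₂ ⊊ ⋯ ⊊ A_k` of subsets of an `m`-element set with `A₁ ≠ ∅` and `A_k` not the
whole set equals `Surj(m, k+1)`. -/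
theorem chains_first_nonempty_last_proper (m k : ℕ) (hk : 1 ≤ k) :
    Nat.card {A : Fin k → Finset (Fin m) //
        StrictMono A ∧ A ⟨0, hk⟩ ≠ ∅ ∧ A ⟨k - 1, by omega⟩ ≠ Finset.univ}
      = Surj m (k + 1) := by
  obtain ⟨n, rfl⟩ : ∃ n, k = n + 1 := ⟨k - 1, by omega⟩
  exact (Nat.card_congr surjectionsEquivStrictChains).symm
end

section
/- Let n ≥ 4 and let A, B ⊆ {3,…,n} satisfy A ∩ B = ∅ and A ∪ B = {3,…,n}. Then the cut vectors of K_{2,n-2} satisfy δ_{{1}∪A | {2}∪B} + δ_{{1}∪B | {2}∪A} = δ_{∅ | [n]} + δ_{{1,2} | {3,…,n}} in ℤ^E. (Consequently the binomial q_{{1}∪A|{2}∪B}·q_{{1}∪B|{2}∪A} − q_{∅|[n]}·q_{{1,2}|{3,…,n}} lies in the cut ideal of K_{2,n-2}.) -/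
/-!
Compare coordinates. Every edge joins a vertex `u ∈ {1, 2}` to a vertex `w ∈ {3, …, n}`.
Both cuts on the left put `u` on the same side (both contain `1`, neither contains `2`), while
`w` lies in exactly one of `A`, `B`; so exactly one of the two cuts separates the edge. On the
right, `δ_{∅|[n]}` separates no edge and `δ_{{1,2}|{3,…,n}}` separates every edge.
-/

/-- The cut vector `δ_{A|B}` of the complete bipartite graph `K_{2,n-2}` on vertex set
`Fin n` (vertices `0, 1` on one side, `2, …, n-1` on the other), as an element of `ℤ^E`.
The edge set `E` is indexed by `Fin 2 × Fin (n-2)`, the edge `(i, j)` joining vertex `i`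
to vertex `j + 2`.  The coordinate at an edge `e` is `1` iff `|A ∩ e| = 1`, i.e. iff
exactly one endpoint of `e` lies in `A`; it only depends on the part `A` of the unordered
partition `A|B`. -/
def cutVec (n : ℕ) (A : Finset (Fin n)) : Fin 2 × Fin (n - 2) → ℤ :=
  fun e =>
    if ((⟨e.1.val, by have := e.1.isLt; have := e.2.isLt; omega⟩ : Fin n) ∈ A ↔
        (⟨e.2.val + 2, by have := e.2.isLt; omega⟩ : Fin n) ∈ A) then 0 else 1

namespace CutVec

variable {n : ℕ}

def edgeLeft (e : Fin 2 × Fin (n - 2)) : Fin n :=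
  ⟨e.1.val, by have := e.1.isLt; have := e.2.isLt; omega⟩

def edgeRight (e : Fin 2 × Fin (n - 2)) : Fin n :=
  ⟨e.2.val + 2, by have := e.2.isLt; omega⟩

lemma edgeLeft_val_lt_two (e : Fin 2 × Fin (n - 2)) : (edgeLeft e).val < 2 :=
  e.1.isLt

lemma two_le_edgeRight_val (e : Fin 2 × Fin (n - 2)) : 2 ≤ (edgeRight e).val :=
  Nat.le_add_left 2 _

lemma cutVec_apply (S : Finset (Fin n)) (e : Fin 2 × Fin (n - 2)) :
    cutVec n S e = if (edgeLeft e ∈ S ↔ edgeRight e ∈ S) then 0 else 1 :=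
  rfl

lemma cutVec_empty : cutVec n ∅ = 0 := by
  funext e
  simp [cutVec_apply]

lemma cutVec_apply_eq_one {S : Finset (Fin n)} {e : Fin 2 × Fin (n - 2)}
    (hl : edgeLeft e ∈ S) (hr : edgeRight e ∉ S) : cutVec n S e = 1 := by
  simp [cutVec_apply, hl, hr]

lemma cutVec_add_cutVec_apply_eq_one {S T : Finset (Fin n)} {e : Fin 2 × Fin (n - 2)}
    (hl : edgeLeft e ∈ S ↔ edgeLeft e ∈ T) (hr : Xor (edgeRight e ∈ S) (edgeRight e ∈ T)) :
    cutVec n S e + cutVec n T e = 1 := by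
  rw [xor_iff_iff_not] at hr
  simp only [cutVec_apply, hl, hr]
  by_cases edgeLeft e ∈ T <;> by_cases edgeRight e ∈ T <;> simp [*]

end CutVec

open CutVec in
/-- For `A, B ⊆ {3, …, n}` with `A ∩ B = ∅` and `A ∪ B = {3, …, n}`, the cut
vectors of `K_{2,n-2}` satisfy
`δ_{{1}∪A|{2}∪B} + δ_{{1}∪B|{2}∪A} = δ_{∅|[n]} + δ_{{1,2}|{3,…,n}}` in `ℤ^E`.
(Vertex `1` of the paper is `⟨0, _⟩`, vertex `2` is `⟨1, _⟩`, and `{3, …, n}` is the set of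
vertices with index `≥ 2` in `Fin n`.) -/
theorem cut_vector_relation_complement (n : ℕ) (hn : 4 ≤ n) (A B : Finset (Fin n))
    (hAB : A ∩ B = ∅)
    (hABu : A ∪ B = Finset.univ.filter (fun v : Fin n => 2 ≤ v.val)) :
    cutVec n (insert ⟨0, by omega⟩ A) + cutVec n (insert ⟨0, by omega⟩ B)
      = cutVec n ∅ + cutVec n {⟨0, by omega⟩, ⟨1, by omega⟩} := by
  have hmem_union (v : Fin n) : v ∈ A ∪ B ↔ 2 ≤ v.val := by simp [hABu]
  funext e
  have hl := edgeLeft_val_lt_two e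
  have hr := two_le_edgeRight_val e
  rw [Pi.add_apply, Pi.add_apply, cutVec_empty, Pi.zero_apply, zero_add,
    cutVec_apply_eq_one (S := {⟨0, by omega⟩, ⟨1, by omega⟩})
      (by simp [Fin.ext_iff]; omega) (by simp [Fin.ext_iff]; omega)]
  refine cutVec_add_cutVec_apply_eq_one ?_ ?_
  · have hlA : edgeLeft e ∉ A := fun h => by
      have := (hmem_union _).1 (Finset.mem_union_left B h); omega
    have hlB : edgeLeft e ∉ B := fun h => by
      have := (hmem_union _).1 (Finset.mem_union_right A h); omega
    simp [hlA, hlB]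
  · have hne : edgeRight e ≠ ⟨0, by omega⟩ := by simp [Fin.ext_iff]; omega
    have hrAB : edgeRight e ∈ A ∪ B := (hmem_union _).2 hr
    have hdisj : edgeRight e ∉ A ∩ B := by simp [hAB]
    simp only [Finset.mem_insert, hne, false_or, xor_iff_or_and_not_and]
    exact ⟨Finset.mem_union.1 hrAB, fun h => hdisj (Finset.mem_inter.2 h)⟩
end

section
/- Let m ≥ 1 and set B_k = Surj(m,k-1) + 2·Surj(m,k) + Surj(m,k+1) for 0 ≤ k ≤ m+1 (with the convention Surj(m,j) = 0 for j < 0). Then in ℤ[x] one has Σ_{k=0}^{m+1} B_k·(x-1)^{m+1-k} = x^2·A_m(x), where A_m(x) is the Eulerian polynomial. -/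
/-- The number of descents of a permutation `w` of `Fin k`: the number of indices `i` with
`w(i) > w(i+1)`. -/
def descents {k : ℕ} (w : Equiv.Perm (Fin k)) : ℕ :=
  (Finset.univ.filter fun i : Fin k => ∃ j : Fin k, (j : ℕ) = (i : ℕ) + 1 ∧ w j < w i).card

/-- The Eulerian polynomial `A_k(x) = Σ_{w ∈ S_k} x^{des(w)}`. -/
noncomputable def eulerianPoly (k : ℕ) : Polynomial ℤ :=
  ∑ w : Equiv.Perm (Fin k), Polynomial.X ^ descents w

namespace BGen

variable {m k : ℕ}

/-! ### descent set -/

def D (w : Equiv.Perm (Fin m)) : Finset (Fin m) :=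
  Finset.univ.filter fun i : Fin m => ∃ j : Fin m, (j : ℕ) = (i : ℕ) + 1 ∧ w j < w i

lemma descents_eq (w : Equiv.Perm (Fin m)) : descents w = (D w).card := rfl

lemma D_lt {w : Equiv.Perm (Fin m)} {i : Fin m} (hi : i ∈ D w) : (i : ℕ) < m - 1 := by
  simp only [D, Finset.mem_filter] at hi
  obtain ⟨-, j, hj, -⟩ := hi
  have := j.isLt
  omega

/-! ### the sort key -/

def key (f : Fin m → Fin k) (i : Fin m) : ℕ := (f i : ℕ) * m + (m - 1 - (i : ℕ))

lemma key_lt_of_lt {f : Fin m → Fin k} {i j : Fin m} (h : f i < f j) : key f i < key f j := by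
  have hi := i.isLt
  have h3 : (f i : ℕ) + 1 ≤ (f j : ℕ) := h
  have h2 : ((f i : ℕ) + 1) * m ≤ (f j : ℕ) * m := Nat.mul_le_mul_right m h3
  rw [add_one_mul] at h2
  simp only [key]; omega

lemma key_le_imp {f : Fin m → Fin k} {i j : Fin m} (h : key f i ≤ key f j) : f i ≤ f j := by
  by_contra hc
  exact absurd (key_lt_of_lt (lt_of_not_ge hc)) (by omega)

lemma key_inj (f : Fin m → Fin k) : Function.Injective (key f) := by
  intro i j h
  have hi := i.isLt; have hj := j.isLt
  have h1 : f i = f j := le_antisymm (key_le_imp h.le) (key_le_imp h.ge)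
  simp only [key, h1] at h
  exact Fin.ext (by omega)

lemma key_lt_imp_of_eq {f : Fin m → Fin k} {i j : Fin m} (h : key f i < key f j)
    (he : f i = f j) : j < i := by
  have hi := i.isLt; have hj := j.isLt
  simp only [key, he] at h
  exact Fin.lt_def.2 (by omega)

/-! ### counting prefixes -/

def cnt (P : Fin m → Prop) [DecidablePred P] (n : ℕ) : ℕ :=
  (Finset.univ.filter fun t : Fin m => (t : ℕ) < n ∧ P t).card

lemma cnt_congr (P Q : Fin m → Prop) [DecidablePred P] [DecidablePred Q]
    (h : ∀ t, P t ↔ Q t) (n : ℕ) : cnt P n = cnt Q n := by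
  unfold cnt
  congr 1
  ext t
  simp [h t]

lemma cnt_zero (P : Fin m → Prop) [DecidablePred P] : cnt P 0 = 0 := by
  simp [cnt]

lemma cnt_succ (P : Fin m → Prop) [DecidablePred P] {n : ℕ} (h : n < m) :
    cnt P (n + 1) = cnt P n + if P ⟨n, h⟩ then 1 else 0 := by
  by_cases hP : P ⟨n, h⟩
  · rw [if_pos hP]
    have hset : (Finset.univ.filter fun t : Fin m => (t : ℕ) < n + 1 ∧ P t)
        = insert ⟨n, h⟩ (Finset.univ.filter fun t : Fin m => (t : ℕ) < n ∧ P t) := by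
      ext t
      simp only [Finset.mem_filter, Finset.mem_insert, Finset.mem_univ, true_and]
      constructor
      · rintro ⟨ht, hPt⟩
        rcases Nat.lt_succ_iff_lt_or_eq.1 ht with h1 | h1
        · exact Or.inr ⟨h1, hPt⟩
        · exact Or.inl (Fin.ext h1)
      · rintro (rfl | ⟨ht, hPt⟩)
        · exact ⟨Nat.lt_succ_self n, hP⟩
        · exact ⟨Nat.lt_succ_of_lt ht, hPt⟩
    rw [cnt, cnt, hset, Finset.card_insert_of_notMem (by simp)]
  · rw [if_neg hP]
    have hset : (Finset.univ.filter fun t : Fin m => (t : ℕ) < n + 1 ∧ P t)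
        = (Finset.univ.filter fun t : Fin m => (t : ℕ) < n ∧ P t) := by
      ext t
      simp only [Finset.mem_filter, Finset.mem_univ, true_and]
      constructor
      · rintro ⟨ht, hPt⟩
        rcases Nat.lt_succ_iff_lt_or_eq.1 ht with h1 | h1
        · exact ⟨h1, hPt⟩
        · exact absurd hPt (by rwa [show t = ⟨n, h⟩ from Fin.ext h1])
      · rintro ⟨ht, hPt⟩
        exact ⟨Nat.lt_succ_of_lt ht, hPt⟩
    rw [cnt, cnt, hset, Nat.add_zero]

lemma cnt_split (P : Fin m → Prop) [DecidablePred P] (n : ℕ) :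
    cnt P n + cnt (fun t => ¬ P t) n = cnt (fun _ : Fin m => True) n := by
  classical
  unfold cnt
  simp only [and_true]
  have h := Finset.card_filter_add_card_filter_not
    (p := P) (s := Finset.univ.filter fun t : Fin m => (t : ℕ) < n)
  simp only [Finset.filter_filter] at h
  exact h

lemma cnt_true : ∀ n ≤ m, cnt (fun _ : Fin m => True) n = n := by
  intro n
  induction n with
  | zero => intro _; exact cnt_zero _
  | succ n ih =>
    intro h
    rw [cnt_succ _ (by omega : n < m), ih (by omega), if_pos trivial]

/-- discrete intermediate value theorem for `cnt` -/
lemma cnt_ivt (P : Fin m → Prop) [DecidablePred P] (n : ℕ) : ∀ (_ : n < m),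
    ∀ v ≤ cnt P n, ∃ i : Fin m, cnt P (i : ℕ) = v := by
  induction n with
  | zero =>
    intro h v hv
    rw [cnt_zero] at hv
    exact ⟨⟨0, h⟩, by simpa [cnt_zero] using (Nat.le_zero.1 hv).symm⟩
  | succ n ih =>
    intro h v hv
    have hn : n < m := by omega
    rcases le_or_gt v (cnt P n) with h1 | h1
    · exact ih hn v h1
    · refine ⟨⟨n + 1, h⟩, ?_⟩
      rw [cnt_succ _ hn] at hv
      have hite : (if P ⟨n, hn⟩ then 1 else 0) ≤ 1 := by split <;> omega
      have : cnt P (n + 1) = v := by rw [cnt_succ _ hn]; omega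
      simpa using this

/-! ### monotone surjective functions -/

lemma mono_surj_zero {F : Fin m → Fin k} (hmono : Monotone F) (hsurj : Function.Surjective F)
    (hm : 0 < m) : (F ⟨0, hm⟩ : ℕ) = 0 := by
  have hk : 0 < k := (F ⟨0, hm⟩).pos
  obtain ⟨j, hj⟩ := hsurj ⟨0, hk⟩
  have h1 : (⟨0, hm⟩ : Fin m) ≤ j := by
    rw [Fin.le_def]; exact Nat.zero_le _
  have h2 := hmono h1
  rw [hj] at h2
  simpa using Fin.le_def.1 h2

lemma mono_surj_last {F : Fin m → Fin k} (hmono : Monotone F) (hsurj : Function.Surjective F)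
    (hm : 0 < m) : (F ⟨m - 1, by omega⟩ : ℕ) = k - 1 := by
  have hk : 0 < k := (F ⟨0, hm⟩).pos
  obtain ⟨j, hj⟩ := hsurj ⟨k - 1, by omega⟩
  have h1 : j ≤ (⟨m - 1, by omega⟩ : Fin m) := by
    rw [Fin.le_def]; exact Nat.le_sub_one_of_lt j.isLt
  have h2 := hmono h1
  rw [hj] at h2
  have h3 := Fin.le_def.1 h2
  have h4 := (F ⟨m - 1, by omega⟩).isLt
  simp only [Fin.val_mk] at h3 ⊢
  omega

lemma mono_surj_step {F : Fin m → Fin k} (hmono : Monotone F) (hsurj : Function.Surjective F)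
    {n : ℕ} (h1 : n < m) (h2 : n + 1 < m) :
    (F ⟨n + 1, h2⟩ : ℕ) ≤ (F ⟨n, h1⟩ : ℕ) + 1 := by
  by_contra hc
  push_neg at hc
  have hlt : (F ⟨n, h1⟩ : ℕ) + 1 < k := lt_trans hc (F ⟨n + 1, h2⟩).isLt
  obtain ⟨j, hj⟩ := hsurj ⟨(F ⟨n, h1⟩ : ℕ) + 1, hlt⟩
  rcases le_or_gt j ⟨n, h1⟩ with hle | hgt
  · have := Fin.le_def.1 (hmono hle)
    rw [hj] at this
    simp only [Fin.val_mk] at this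
    omega
  · have hge : (⟨n + 1, h2⟩ : Fin m) ≤ j := by
      rw [Fin.le_def]; exact Fin.lt_def.1 hgt
    have := Fin.le_def.1 (hmono hge)
    rw [hj] at this
    simp only [Fin.val_mk] at this
    omega

/-! ### ties -/

def tie (F : Fin m → Fin k) (i : Fin m) : Prop :=
  ∃ j : Fin m, (j : ℕ) = (i : ℕ) + 1 ∧ F j = F i

instance (F : Fin m → Fin k) : DecidablePred (tie F) := fun _ => by
  unfold tie; infer_instance

lemma tie_iff {F : Fin m → Fin k} {n : ℕ} (h1 : n < m) (h2 : n + 1 < m) :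
    tie F ⟨n, h1⟩ ↔ F ⟨n + 1, h2⟩ = F ⟨n, h1⟩ := by
  constructor
  · rintro ⟨j, hj, hFj⟩
    rwa [show (⟨n + 1, h2⟩ : Fin m) = j from Fin.ext (by simpa using hj.symm)]
  · intro hF
    exact ⟨⟨n + 1, h2⟩, by simp, hF⟩

lemma tie_lt {F : Fin m → Fin k} {i : Fin m} (h : tie F i) : (i : ℕ) < m - 1 := by
  obtain ⟨j, hj, -⟩ := h
  have := j.isLt
  omega

/-- A monotone surjective map's value equals the number of non-tie positions before it. -/
lemma count_formula {F : Fin m → Fin k} (hmono : Monotone F) (hsurj : Function.Surjective F)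
    (n : ℕ) : ∀ (h : n < m), (F ⟨n, h⟩ : ℕ) = cnt (fun t => ¬ tie F t) n := by
  induction n with
  | zero => intro h; rw [cnt_zero, mono_surj_zero hmono hsurj h]
  | succ n ih =>
    intro h
    have hn : n < m := by omega
    rw [cnt_succ _ hn]
    by_cases ht : tie F ⟨n, hn⟩
    · rw [if_neg (by simpa using ht), (tie_iff hn h).1 ht, ih hn, Nat.add_zero]
    · rw [if_pos (by simpa using ht)]
      have hne : F ⟨n + 1, h⟩ ≠ F ⟨n, hn⟩ := fun hc => ht ((tie_iff hn h).2 hc)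
      have hle : F ⟨n, hn⟩ ≤ F ⟨n + 1, h⟩ := hmono (by rw [Fin.le_def]; simp)
      have hstep := mono_surj_step hmono hsurj hn h
      have : (F ⟨n, hn⟩ : ℕ) < (F ⟨n + 1, h⟩ : ℕ) :=
        lt_of_le_of_ne (Fin.le_def.1 hle) fun hc => hne (Fin.ext hc.symm)
      rw [← ih hn]
      omega

end BGen

namespace BGen

variable {m k : ℕ}

/-! ### the forward map : surjections to (permutation, tie-set) pairs -/

def σf (f : Fin m → Fin k) : Equiv.Perm (Fin m) := Tuple.sort (key f)

def Sf (f : Fin m → Fin k) : Finset (Fin m) :=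
  Finset.univ.filter (tie (f ∘ σf f))

lemma key_sort_mono (f : Fin m → Fin k) : Monotone (key f ∘ σf f) :=
  Tuple.monotone_sort (key f)

lemma key_sort_strictMono (f : Fin m → Fin k) : StrictMono (key f ∘ σf f) :=
  (key_sort_mono f).strictMono_of_injective ((key_inj f).comp (σf f).injective)

lemma F_mono (f : Fin m → Fin k) : Monotone (f ∘ σf f) :=
  fun _ _ hij => key_le_imp (f := f) (key_sort_mono f hij)

lemma F_surj {f : Fin m → Fin k} (hf : Function.Surjective f) :
    Function.Surjective (f ∘ σf f) :=
  hf.comp (σf f).surjective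

lemma Sf_subset_D (f : Fin m → Fin k) : Sf f ⊆ D (σf f) := by
  intro t ht
  simp only [Sf, Finset.mem_filter, Finset.mem_univ, true_and] at ht
  obtain ⟨j, hj, hfeq⟩ := ht
  have htj : t < j := Fin.lt_def.2 (by omega)
  have hkey : key f (σf f t) < key f (σf f j) := key_sort_strictMono f htj
  have : σf f j < σf f t := key_lt_imp_of_eq hkey hfeq.symm
  simp only [D, Finset.mem_filter, Finset.mem_univ, true_and]
  exact ⟨j, hj, this⟩

lemma card_Sf {f : Fin m → Fin k} (hf : Function.Surjective f) (hm : 1 ≤ m) (hk : k ≤ m) :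
    (Sf f).card = m - k := by
  have hm0 : 0 < m := hm
  have hk1 : 0 < k := (f ⟨0, hm0⟩).pos
  have hmono := F_mono f
  have hsurj := F_surj hf
  have hlast : ((f ∘ σf f) ⟨m - 1, by omega⟩ : ℕ) = k - 1 := mono_surj_last hmono hsurj hm0
  have hcount := count_formula hmono hsurj (m - 1) (by omega)
  have hsplit := cnt_split (tie (f ∘ σf f)) (m - 1)
  rw [cnt_true (m - 1) (by omega)] at hsplit
  have hSf : Sf f = Finset.univ.filter
      (fun t : Fin m => (t : ℕ) < m - 1 ∧ tie (f ∘ σf f) t) := by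
    ext t
    simp only [Sf, Finset.mem_filter, Finset.mem_univ, true_and]
    exact ⟨fun h => ⟨tie_lt h, h⟩, fun h => h.2⟩
  have : (Sf f).card = cnt (tie (f ∘ σf f)) (m - 1) := by rw [hSf]; rfl
  rw [this]
  omega

/-! ### the backward map -/

lemma S_mem_lt {w : Equiv.Perm (Fin m)} {S : Finset (Fin m)} (hS : S ⊆ D w)
    {i : Fin m} (hi : i ∈ S) : (i : ℕ) < m - 1 := D_lt (hS hi)

lemma k_pos {w : Equiv.Perm (Fin m)} {S : Finset (Fin m)} (hS : S ⊆ D w)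
    (hcard : S.card = m - k) (hk : k ≤ m) (hm : 1 ≤ m) : 0 < k := by
  by_contra hc
  push_neg at hc
  interval_cases k
  have : S = Finset.univ := Finset.eq_univ_of_card S (by simp [hcard])
  have := S_mem_lt hS (this ▸ Finset.mem_univ (⟨m - 1, by omega⟩ : Fin m))
  simp at this

lemma bi_lt {w : Equiv.Perm (Fin m)} {S : Finset (Fin m)} (hS : S ⊆ D w)
    (hcard : S.card = m - k) (hk : k ≤ m) (hm : 1 ≤ m) {n : ℕ} (hn : n < m) :
    cnt (fun t => t ∉ S) n < k := by
  have hk1 : 0 < k := k_pos hS hcard hk hm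
  have hlastS : (⟨m - 1, by omega⟩ : Fin m) ∉ S := fun h => by
    have := S_mem_lt hS h; simp at this
  have hsub : (Finset.univ.filter fun t : Fin m => (t : ℕ) < n ∧ t ∉ S)
      ⊆ (Finset.univ \ S).erase ⟨m - 1, by omega⟩ := by
    intro t ht
    simp only [Finset.mem_filter, Finset.mem_univ, true_and] at ht
    rw [Finset.mem_erase, Finset.mem_sdiff]
    refine ⟨?_, Finset.mem_univ t, ht.2⟩
    intro hc
    have : (t : ℕ) = m - 1 := by rw [hc]
    omega
  have hcard2 : ((Finset.univ \ S).erase ⟨m - 1, by omega⟩).card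
      = (Finset.univ \ S).card - 1 :=
    Finset.card_erase_of_mem (Finset.mem_sdiff.2 ⟨Finset.mem_univ _, hlastS⟩)
  have hcard3 : (Finset.univ \ S).card = m - S.card := by
    rw [Finset.card_sdiff_of_subset (Finset.subset_univ S)]
    simp
  have := Finset.card_le_card hsub
  rw [hcard2, hcard3, hcard] at this
  have h2 : cnt (fun t => t ∉ S) n
      = (Finset.univ.filter fun t : Fin m => (t : ℕ) < n ∧ t ∉ S).card := rfl
  rw [h2]
  omega

def gmap (w : Equiv.Perm (Fin m)) (S : Finset (Fin m)) (hS : S ⊆ D w)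
    (hcard : S.card = m - k) (hk : k ≤ m) (hm : 1 ≤ m) : Fin m → Fin k :=
  fun x => ⟨cnt (fun t => t ∉ S) ((w.symm x : Fin m) : ℕ),
    bi_lt hS hcard hk hm (w.symm x).isLt⟩

lemma gmap_apply_w (w : Equiv.Perm (Fin m)) (S : Finset (Fin m)) (hS : S ⊆ D w)
    (hcard : S.card = m - k) (hk : k ≤ m) (hm : 1 ≤ m) (i : Fin m) :
    (gmap w S hS hcard hk hm (w i) : ℕ) = cnt (fun t => t ∉ S) (i : ℕ) := by
  simp [gmap]

lemma gmap_surj (w : Equiv.Perm (Fin m)) (S : Finset (Fin m)) (hS : S ⊆ D w)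
    (hcard : S.card = m - k) (hk : k ≤ m) (hm : 1 ≤ m) :
    Function.Surjective (gmap w S hS hcard hk hm) := by
  intro v
  have hk1 : 0 < k := k_pos hS hcard hk hm
  -- compute cnt (∉ S) (m-1) = k - 1
  have hsplit := cnt_split (fun t : Fin m => t ∉ S) (m - 1)
  rw [cnt_true (m - 1) (by omega)] at hsplit
  have hSeq : cnt (fun t : Fin m => ¬ t ∉ S) (m - 1) = S.card := by
    unfold cnt
    congr 1
    ext t
    simp only [Finset.mem_filter, Finset.mem_univ, true_and, not_not]
    exact ⟨fun h => h.2, fun h => ⟨S_mem_lt hS h, h⟩⟩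
  rw [hSeq, hcard] at hsplit
  have hv : (v : ℕ) ≤ cnt (fun t : Fin m => t ∉ S) (m - 1) := by
    have := v.isLt
    omega
  obtain ⟨i, hi⟩ := cnt_ivt (fun t : Fin m => t ∉ S) (m - 1) (by omega) (v : ℕ) hv
  refine ⟨w i, Fin.ext ?_⟩
  rw [gmap_apply_w, hi]

end BGen

namespace BGen

variable {m k : ℕ}

/-! ### left inverse -/

lemma gmap_σf_Sf {f : Fin m → Fin k} (hf : Function.Surjective f)
    (hS : Sf f ⊆ D (σf f)) (hcard : (Sf f).card = m - k) (hk : k ≤ m) (hm : 1 ≤ m) :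
    gmap (σf f) (Sf f) hS hcard hk hm = f := by
  funext x
  apply Fin.ext
  show cnt (fun t => t ∉ Sf f) (((σf f).symm x : Fin m) : ℕ) = (f x : ℕ)
  set t := (σf f).symm x with ht
  have hx : x = σf f t := by rw [ht, Equiv.apply_symm_apply]
  have hcf := count_formula (F_mono f) (F_surj hf) (t : ℕ) t.isLt
  have heta : (⟨(t : ℕ), t.isLt⟩ : Fin m) = t := rfl
  rw [heta] at hcf
  have hcongr : cnt (fun t' => t' ∉ Sf f) (t : ℕ)
      = cnt (fun t' => ¬ tie (f ∘ σf f) t') (t : ℕ) := by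
    apply cnt_congr
    intro t'
    simp [Sf]
  rw [hcongr, ← hcf, hx]
  rfl

/-! ### right inverse -/

lemma strictMono_of_adj {α : Type*} [Preorder α] {g : Fin m → α}
    (h : ∀ n (h1 : n < m) (h2 : n + 1 < m), g ⟨n, h1⟩ < g ⟨n + 1, h2⟩) : StrictMono g := by
  have key : ∀ (d n : ℕ) (h1 : n < m) (h2 : n + d + 1 < m), g ⟨n, h1⟩ < g ⟨n + d + 1, h2⟩ := by
    intro d
    induction d with
    | zero => intro n h1 h2; exact h n h1 h2
    | succ d ih =>
      intro n h1 h2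
      exact lt_trans (ih n h1 (by omega)) (h (n + d + 1) (by omega) h2)
  intro i j hij
  have hij' : (i : ℕ) < (j : ℕ) := hij
  obtain ⟨d, hd⟩ : ∃ d, (j : ℕ) = (i : ℕ) + d + 1 := ⟨(j : ℕ) - (i : ℕ) - 1, by omega⟩
  rw [show j = ⟨(i : ℕ) + d + 1, by omega⟩ from Fin.ext (by simp [hd])]
  exact key d (i : ℕ) i.isLt (by omega)

lemma key_gmap_strictMono (w : Equiv.Perm (Fin m)) (S : Finset (Fin m)) (hS : S ⊆ D w)
    (hcard : S.card = m - k) (hk : k ≤ m) (hm : 1 ≤ m) :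
    StrictMono (fun i => key (gmap w S hS hcard hk hm) (w i)) := by
  set g := gmap w S hS hcard hk hm with hg
  apply strictMono_of_adj
  intro n h1 h2
  have hval : ∀ (i : Fin m), key g (w i) = cnt (fun t => t ∉ S) (i : ℕ) * m
      + (m - 1 - ((w i : Fin m) : ℕ)) := by
    intro i
    rw [key, hg, gmap_apply_w]
  rw [hval ⟨n, h1⟩, hval ⟨n + 1, h2⟩]
  simp only [Fin.val_mk]
  by_cases hmem : (⟨n, h1⟩ : Fin m) ∈ S
  · have hcs : cnt (fun t : Fin m => t ∉ S) (n + 1) = cnt (fun t : Fin m => t ∉ S) n := by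
      rw [cnt_succ _ h1, if_neg (by simpa using hmem), Nat.add_zero]
    rw [hcs]
    have hDw := hS hmem
    simp only [D, Finset.mem_filter, Finset.mem_univ, true_and] at hDw
    obtain ⟨j, hj, hwj⟩ := hDw
    have hjeq : j = ⟨n + 1, h2⟩ := Fin.ext (by simpa using hj)
    rw [hjeq] at hwj
    have hw1 := (w ⟨n, h1⟩).isLt
    have hw2 := Fin.lt_def.1 hwj
    have := (w ⟨n + 1, h2⟩).isLt
    omega
  · have hcs : cnt (fun t : Fin m => t ∉ S) (n + 1) = cnt (fun t : Fin m => t ∉ S) n + 1 := by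
      rw [cnt_succ _ h1, if_pos (by simpa using hmem)]
    rw [hcs, add_one_mul]
    have hw1 := (w ⟨n, h1⟩).isLt
    have := (w ⟨n + 1, h2⟩).isLt
    omega

lemma σf_gmap (w : Equiv.Perm (Fin m)) (S : Finset (Fin m)) (hS : S ⊆ D w)
    (hcard : S.card = m - k) (hk : k ≤ m) (hm : 1 ≤ m) :
    σf (gmap w S hS hcard hk hm) = w := by
  have hsm := key_gmap_strictMono w S hS hcard hk hm
  have := (Tuple.eq_sort_iff (f := key (gmap w S hS hcard hk hm)) (σ := w)).2
    ⟨hsm.monotone, fun i j hij heq => absurd (hsm hij) (by rw [show (fun i => key (gmap w S hS hcard hk hm) (w i)) i = (fun i => key (gmap w S hS hcard hk hm) (w i)) j from heq]; exact lt_irrefl _)⟩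
  exact this.symm

lemma Sf_gmap (w : Equiv.Perm (Fin m)) (S : Finset (Fin m)) (hS : S ⊆ D w)
    (hcard : S.card = m - k) (hk : k ≤ m) (hm : 1 ≤ m) :
    Sf (gmap w S hS hcard hk hm) = S := by
  set g := gmap w S hS hcard hk hm with hg
  have hσ : σf g = w := σf_gmap w S hS hcard hk hm
  ext i
  simp only [Sf, hσ, Finset.mem_filter, Finset.mem_univ, true_and]
  constructor
  · rintro ⟨j, hj, heq⟩
    have h2 : (i : ℕ) + 1 < m := by rw [← hj]; exact j.isLt
    have hjeq : j = ⟨(i : ℕ) + 1, h2⟩ := Fin.ext (by simpa using hj)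
    rw [hjeq] at heq
    have hv : cnt (fun t => t ∉ S) ((i : ℕ) + 1) = cnt (fun t => t ∉ S) (i : ℕ) := by
      have e1 := gmap_apply_w w S hS hcard hk hm ⟨(i : ℕ) + 1, h2⟩
      have e2 := gmap_apply_w w S hS hcard hk hm i
      rw [← hg] at e1 e2
      rw [show ((⟨(i : ℕ) + 1, h2⟩ : Fin m) : ℕ) = (i : ℕ) + 1 from rfl] at e1
      rw [← e1, ← e2]
      show ((g ∘ w) ⟨(i : ℕ) + 1, h2⟩ : ℕ) = ((g ∘ w) i : ℕ)
      rw [show (g ∘ w) ⟨(i : ℕ) + 1, h2⟩ = (g ∘ w) i from heq]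
    rw [cnt_succ _ i.isLt] at hv
    by_contra hmem
    rw [if_pos (by simpa using hmem)] at hv
    omega
  · intro hi
    have hlt : (i : ℕ) < m - 1 := S_mem_lt hS hi
    have h2 : (i : ℕ) + 1 < m := by omega
    refine ⟨⟨(i : ℕ) + 1, h2⟩, by simp, ?_⟩
    apply Fin.ext
    have e1 := gmap_apply_w w S hS hcard hk hm ⟨(i : ℕ) + 1, h2⟩
    have e2 := gmap_apply_w w S hS hcard hk hm i
    rw [← hg] at e1 e2
    show (g (w ⟨(i : ℕ) + 1, h2⟩) : ℕ) = (g (w i) : ℕ)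
    rw [e1, e2, show ((⟨(i : ℕ) + 1, h2⟩ : Fin m) : ℕ) = (i : ℕ) + 1 from rfl,
      cnt_succ _ i.isLt, if_neg (by simpa using hi), Nat.add_zero]

end BGen

namespace BGen

/-! ### the core counting identity -/

theorem core (m k : ℕ) (hm : 1 ≤ m) (hk : k ≤ m) :
    Surj m k = ∑ w : Equiv.Perm (Fin m), (descents w).choose (m - k) := by
  rw [Surj, Nat.card_eq_fintype_card, Fintype.card_subtype]
  have hRHS : ∑ w : Equiv.Perm (Fin m), (descents w).choose (m - k)
      = (Finset.univ.sigma fun w : Equiv.Perm (Fin m) => (D w).powersetCard (m - k)).card := by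
    rw [Finset.card_sigma]
    refine (Finset.sum_congr rfl fun w _ => ?_).symm
    rw [Finset.card_powersetCard, descents_eq]
  rw [hRHS]
  refine Finset.card_bij'
    (fun f _ => (⟨σf f, Sf f⟩ : Σ _ : Equiv.Perm (Fin m), Finset (Fin m)))
    (fun p hp => gmap p.1 p.2
      (Finset.mem_powersetCard.1 (Finset.mem_sigma.1 hp).2).1
      (Finset.mem_powersetCard.1 (Finset.mem_sigma.1 hp).2).2 hk hm)
    ?_ ?_ ?_ ?_
  · intro f hf
    have hf' : Function.Surjective f := (Finset.mem_filter.1 hf).2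
    exact Finset.mem_sigma.2 ⟨Finset.mem_univ _,
      Finset.mem_powersetCard.2 ⟨Sf_subset_D f, card_Sf hf' hm hk⟩⟩
  · intro p hp
    exact Finset.mem_filter.2 ⟨Finset.mem_univ _, gmap_surj _ _ _ _ hk hm⟩
  · intro f hf
    exact gmap_σf_Sf (Finset.mem_filter.1 hf).2 _ _ hk hm
  · rintro ⟨w, S⟩ hp
    have h1 := σf_gmap w S
      (Finset.mem_powersetCard.1 (Finset.mem_sigma.1 hp).2).1
      (Finset.mem_powersetCard.1 (Finset.mem_sigma.1 hp).2).2 hk hm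
    have h2 := Sf_gmap w S
      (Finset.mem_powersetCard.1 (Finset.mem_sigma.1 hp).2).1
      (Finset.mem_powersetCard.1 (Finset.mem_sigma.1 hp).2).2 hk hm
    simp only [h1, h2]

end BGen

namespace BGen

open Polynomial

lemma Surj_eq_zero_of_gt {m j : ℕ} (h : m < j) : Surj m j = 0 := by
  rw [Surj]
  have : IsEmpty {f : Fin m → Fin j // Function.Surjective f} := by
    refine ⟨fun ⟨f, hf⟩ => absurd (Fintype.card_le_of_surjective f hf) ?_⟩
    simp only [Fintype.card_fin]
    omega
  simp

lemma Surj_zero_eq_zero {m : ℕ} (hm : 1 ≤ m) : Surj m 0 = 0 := by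
  rw [Surj]
  have : IsEmpty {f : Fin m → Fin 0 // Function.Surjective f} :=
    ⟨fun ⟨f, _⟩ => (f ⟨0, hm⟩).elim0⟩
  simp

lemma descents_le (w : Equiv.Perm (Fin m)) : descents w ≤ m := by
  rw [descents_eq]
  exact le_trans (Finset.card_le_univ _) (by simp)

lemma binom_sum (d : ℕ) (hd : d ≤ m) :
    ∑ j ∈ Finset.range (m + 1), (d.choose j : Polynomial ℤ) * (X - 1) ^ j = X ^ d := by
  have h1 : ∑ j ∈ Finset.range (d + 1), (d.choose j : Polynomial ℤ) * (X - 1) ^ j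
      = ∑ j ∈ Finset.range (m + 1), (d.choose j : Polynomial ℤ) * (X - 1) ^ j := by
    apply Finset.sum_subset
    · intro x hx
      simp only [Finset.mem_range] at hx ⊢
      omega
    · intro x _ hx
      simp only [Finset.mem_range, not_lt] at hx
      rw [Nat.choose_eq_zero_of_lt (by omega)]
      simp
  rw [← h1]
  have h2 := add_pow (X - 1 : Polynomial ℤ) 1 d
  simp only [sub_add_cancel, one_pow, mul_one] at h2
  rw [h2]
  refine Finset.sum_congr rfl fun j _ => ?_
  ring

lemma eulerian_as_sum (m : ℕ) (hm : 1 ≤ m) :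
    ∑ k ∈ Finset.range (m + 1), (Surj m k : Polynomial ℤ) * (X - 1) ^ (m - k)
      = eulerianPoly m := by
  rw [← Finset.sum_range_reflect]
  have h1 : ∀ j ∈ Finset.range (m + 1),
      (Surj m (m + 1 - 1 - j) : Polynomial ℤ) * (X - 1) ^ (m - (m + 1 - 1 - j))
        = ∑ w : Equiv.Perm (Fin m), ((descents w).choose j : Polynomial ℤ) * (X - 1) ^ j := by
    intro j hj
    simp only [Finset.mem_range] at hj
    have hj' : j ≤ m := by omega
    have e1 : m + 1 - 1 - j = m - j := by omega
    have e2 : m - (m - j) = j := by omega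
    rw [e1, e2, core m (m - j) hm (by omega)]
    have e3 : m - (m - j) = j := by omega
    rw [e3]
    push_cast
    rw [Finset.sum_mul]
  rw [Finset.sum_congr rfl h1, Finset.sum_comm]
  rw [eulerianPoly]
  refine Finset.sum_congr rfl fun w _ => ?_
  exact binom_sum (descents w) (descents_le w)

end BGen



/-- For `m ≥ 1` and `B_k = Surj(m,k-1) + 2·Surj(m,k) + Surj(m,k+1)`
(with `Surj(m,j) = 0` for `j < 0`), one has
`Σ_{k=0}^{m+1} B_k·(x-1)^{m+1-k} = x^2·A_m(x)` in `ℤ[x]`. -/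
theorem B_generating_identity (m : ℕ) (hm : 1 ≤ m) :
    ∑ k ∈ Finset.range (m + 2),
        (((if k = 0 then 0 else Surj m (k - 1)) + 2 * Surj m k + Surj m (k + 1) : ℕ) :
            Polynomial ℤ) * (Polynomial.X - 1) ^ (m + 1 - k)
      = Polynomial.X ^ 2 * eulerianPoly m := by

  classical
  set E : Polynomial ℤ := ∑ k ∈ Finset.range (m + 1), (Surj m k : Polynomial ℤ) * (Polynomial.X - 1) ^ (m - k)
    with hE
  have hEeq : E = eulerianPoly m := BGen.eulerian_as_sum m hm
  have hsplit : ∀ k ∈ Finset.range (m + 2),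
      (((if k = 0 then 0 else Surj m (k - 1)) + 2 * Surj m k + Surj m (k + 1) : ℕ) :
          Polynomial ℤ) * (Polynomial.X - 1) ^ (m + 1 - k)
      = ((if k = 0 then 0 else (Surj m (k - 1) : Polynomial ℤ))) * (Polynomial.X - 1) ^ (m + 1 - k)
        + 2 * (Surj m k : Polynomial ℤ) * (Polynomial.X - 1) ^ (m + 1 - k)
        + (Surj m (k + 1) : Polynomial ℤ) * (Polynomial.X - 1) ^ (m + 1 - k) := by
    intro k _
    push_cast
    split <;> ring
  rw [Finset.sum_congr rfl hsplit]
  rw [Finset.sum_add_distrib, Finset.sum_add_distrib]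
  have hS1 : ∑ k ∈ Finset.range (m + 2),
      (if k = 0 then 0 else (Surj m (k - 1) : Polynomial ℤ)) * (Polynomial.X - 1) ^ (m + 1 - k) = E := by
    rw [Finset.sum_range_succ']
    have hterm : ∀ i ∈ Finset.range (m + 1),
        (if i + 1 = 0 then 0 else (Surj m (i + 1 - 1) : Polynomial ℤ)) * (Polynomial.X - 1) ^ (m + 1 - (i + 1))
          = (Surj m i : Polynomial ℤ) * (Polynomial.X - 1) ^ (m - i) := by
      intro i _
      rw [if_neg (Nat.succ_ne_zero i), Nat.add_sub_cancel, Nat.succ_sub_succ]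
    rw [Finset.sum_congr rfl hterm]
    simp [hE]
  have hS2 : ∑ k ∈ Finset.range (m + 2),
      2 * (Surj m k : Polynomial ℤ) * (Polynomial.X - 1) ^ (m + 1 - k) = 2 * (Polynomial.X - 1) * E := by
    rw [Finset.sum_range_succ, BGen.Surj_eq_zero_of_gt (by omega : m < m + 1)]
    simp only [Nat.cast_zero, mul_zero, zero_mul, add_zero]
    rw [hE, Finset.mul_sum]
    refine Finset.sum_congr rfl fun k hk => ?_
    simp only [Finset.mem_range] at hk
    have : m + 1 - k = (m - k) + 1 := by omega
    rw [this]
    ring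
  have hS3 : ∑ k ∈ Finset.range (m + 2),
      (Surj m (k + 1) : Polynomial ℤ) * (Polynomial.X - 1) ^ (m + 1 - k) = (Polynomial.X - 1) ^ 2 * E := by
    rw [Finset.sum_range_succ, Finset.sum_range_succ,
      BGen.Surj_eq_zero_of_gt (by omega : m < m + 1 + 1),
      BGen.Surj_eq_zero_of_gt (by omega : m < m + 1)]
    simp only [Nat.cast_zero, zero_mul, add_zero]
    have hEalt : E = ∑ k ∈ Finset.range m, (Surj m (k + 1) : Polynomial ℤ) * (Polynomial.X - 1) ^ (m - (k + 1)) := by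
      rw [hE, Finset.sum_range_succ', BGen.Surj_zero_eq_zero hm]
      simp
    rw [hEalt, Finset.mul_sum]
    refine Finset.sum_congr rfl fun k hk => ?_
    simp only [Finset.mem_range] at hk
    have : m + 1 - k = (m - (k + 1)) + 2 := by omega
    rw [this]
    ring
  rw [hS1, hS2, hS3, hEeq]
  ring
end
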